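/- arXiv:2305.05479 — 5 statements merged into one kernel-verified Lean document; each statement's English description precedes it below -/
import Mathlib

section
/- For any π̄ in the face H_1 = {π ∈ Π : π(1) = 0}, the line segment L(e_1, π̄) = {γ·e_1 + (1−γ)·π̄ : γ ∈ [0,1]} is totally ordered with respect to MLR ordering: for γ₁ ≤ γ₂, we have γ₁·e_1 + (1−γ₁)·π̄ ≥_r γ₂·e_1 + (1−γ₂)·π̄. -/
def IsSimplex {S : ℕ} (π : Fin S → ℝ) : Prop :=
  (∀ i, 0 ≤ π i) ∧ ∑ i, π i = 1

/-- `MLRge π₁ π₂` means π₁ ≥_r π₂. -/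
def MLRge {S : ℕ} (π₁ π₂ : Fin S → ℝ) : Prop :=
  ∀ i j : Fin S, i < j → π₂ j * π₁ i ≤ π₁ j * π₂ i

/-- the line segment L(e₁, pibar), with pibar on the face {π : π(1) = 0},
is totally ordered under MLR: for γ₁ ≤ γ₂ in [0,1],
γ₁·e₁ + (1−γ₁)·pibar ≥_r γ₂·e₁ + (1−γ₂)·pibar.  (Here e₁ is the first vertex.) -/
theorem line_segment_totally_ordered (S : ℕ) (hS : 0 < S)
    (pibar : Fin S → ℝ) (hpibar : IsSimplex pibar) (hface : pibar ⟨0, hS⟩ = 0)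
    (γ₁ γ₂ : ℝ) (h0 : 0 ≤ γ₁) (h12 : γ₁ ≤ γ₂) (h1 : γ₂ ≤ 1) :
    MLRge (fun i => γ₁ * (if i = ⟨0, hS⟩ then 1 else 0) + (1 - γ₁) * pibar i)
          (fun i => γ₂ * (if i = ⟨0, hS⟩ then 1 else 0) + (1 - γ₂) * pibar i) := by
  intro i j hij
  have hj0 : j ≠ ⟨0, hS⟩ := by
    intro h
    subst h
    exact absurd hij (by simp [Fin.lt_def])
  simp only [if_neg hj0]
  by_cases hi0 : i = ⟨0, hS⟩
  · subst hi0
    simp only [if_pos rfl, hface, if_true]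
    norm_num
    have hpj : 0 ≤ pibar j := hpibar.1 j
    have key : γ₁ * (1 - γ₂) ≤ γ₂ * (1 - γ₁) := by nlinarith
    nlinarith
  · simp only [if_neg hi0]
    ring_nf
    nlinarith [hpibar.1 i, hpibar.1 j]
end

section
/- If the transition matrix P is TP2, then the predictor preserves MLR: for probability vectors π₁ ≥_r π₂ (MLR order), Pᵀπ₁ ≥_r Pᵀπ₂. -/
def IsTP2 {S : ℕ} (A : Fin S → Fin S → ℝ) : Prop :=
  ∀ i₁ i₂ j₁ j₂ : Fin S, i₁ < i₂ → j₁ < j₂ →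
    A i₁ j₂ * A i₂ j₁ ≤ A i₁ j₁ * A i₂ j₂

/-- if P is TP2 and row-stochastic then the one-step predictor
π ↦ Pᵀπ preserves MLR ordering. -/
theorem predictor_preserves_mlr (S : ℕ) (P : Fin S → Fin S → ℝ)
    (hP0 : ∀ i j, 0 ≤ P i j) (hProw : ∀ i, ∑ j, P i j = 1) (hPtp2 : IsTP2 P)
    (π₁ π₂ : Fin S → ℝ) (h₁ : IsSimplex π₁) (h₂ : IsSimplex π₂)
    (hmlr : MLRge π₁ π₂) :
    MLRge (fun j => ∑ i, P i j * π₁ i) (fun j => ∑ i, P i j * π₂ i) := by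
  intro i j hij
  simp only
  have key : 0 ≤ ∑ a, ∑ b,
      (P a j * P b i - P a i * P b j) * (π₁ a * π₂ b - π₂ a * π₁ b) := by
    apply Finset.sum_nonneg; intro a _
    apply Finset.sum_nonneg; intro b _
    rcases lt_trichotomy a b with h | h | h
    · have h1 := hPtp2 a b i j h hij
      have h2 := hmlr a b h
      nlinarith
    · subst h
      exact le_of_eq (by ring)
    · have h1 := hPtp2 b a i j h hij
      have h2 := hmlr b a h
      nlinarith
  have factor : ∀ (u v : Fin S → ℝ),
      ∑ a, ∑ b, u a * v b = (∑ a, u a) * (∑ b, v b) :=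
    fun u v => (Finset.sum_mul_sum _ _ _ _).symm
  have h1 := factor (fun a => P a j * π₁ a) (fun b => P b i * π₂ b)
  have h2 := factor (fun a => P a j * π₂ a) (fun b => P b i * π₁ b)
  have h3 := factor (fun a => P a i * π₁ a) (fun b => P b j * π₂ b)
  have h4 := factor (fun a => P a i * π₂ a) (fun b => P b j * π₁ b)
  have expand : ∑ a, ∑ b,
      (P a j * P b i - P a i * P b j) * (π₁ a * π₂ b - π₂ a * π₁ b)
      = (∑ a, P a j * π₁ a) * (∑ b, P b i * π₂ b)
        - (∑ a, P a j * π₂ a) * (∑ b, P b i * π₁ b)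
        - (∑ a, P a i * π₁ a) * (∑ b, P b j * π₂ b)
        + (∑ a, P a i * π₂ a) * (∑ b, P b j * π₁ b) := by
    calc ∑ a, ∑ b, (P a j * P b i - P a i * P b j) * (π₁ a * π₂ b - π₂ a * π₁ b)
        = ∑ a, ∑ b, ((P a j * π₁ a) * (P b i * π₂ b)
            - (P a j * π₂ a) * (P b i * π₁ b)
            - (P a i * π₁ a) * (P b j * π₂ b)
            + (P a i * π₂ a) * (P b j * π₁ b)) := by
          refine Finset.sum_congr rfl fun a _ => Finset.sum_congr rfl fun b _ => by ring
      _ = _ := by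
          simp only [Finset.sum_add_distrib, Finset.sum_sub_distrib]
          rw [h1, h2, h3, h4]
  linarith
end

section
/- If the transition matrix P and observation matrix B are TP2, then the Bayesian filter update T(π,y) = B_y Pᵀ π / (𝟙ᵀ B_y Pᵀ π) preserves MLR ordering in the belief: π₁ ≥_r π₂ implies T(π₁,y) ≥_r T(π₂,y) for every observation y with positive normalization. -/
/-- TP2 for a general (possibly rectangular) nonnegative kernel. -/
def IsTP2' {m n : ℕ} (A : Fin m → Fin n → ℝ) : Prop :=
  ∀ i₁ i₂ j₁ j₂, i₁ < i₂ → j₁ < j₂ →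
    A i₁ j₂ * A i₂ j₁ ≤ A i₁ j₁ * A i₂ j₂

/-- Bayesian filter update T(π,y)(j) = B(j,y)·(Pᵀπ)(j) / σ(π,y). -/
noncomputable def filterUpdate {S Y : ℕ} (P : Fin S → Fin S → ℝ)
    (B : Fin S → Fin Y → ℝ) (π : Fin S → ℝ) (y : Fin Y) : Fin S → ℝ :=
  fun j => B j y * (∑ i, P i j * π i) / (∑ j', B j' y * (∑ i, P i j' * π i))

lemma key_mlr {S : ℕ} (P : Fin S → Fin S → ℝ) (hPtp2 : IsTP2' P)
    (π₁ π₂ : Fin S → ℝ) (hmlr : MLRge π₁ π₂) (i j : Fin S) (hij : i < j) :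
    (∑ a, P a j * π₂ a) * (∑ b, P b i * π₁ b) ≤
      (∑ a, P a j * π₁ a) * (∑ b, P b i * π₂ b) := by
  rw [← sub_nonneg]
  have h : (∑ a, P a j * π₁ a) * (∑ b, P b i * π₂ b) -
      (∑ a, P a j * π₂ a) * (∑ b, P b i * π₁ b) =
      ∑ a, ∑ b, P a j * P b i * (π₁ a * π₂ b - π₂ a * π₁ b) := by
    rw [Finset.sum_mul_sum, Finset.sum_mul_sum, ← Finset.sum_sub_distrib]
    refine Finset.sum_congr rfl fun a _ => ?_
    rw [← Finset.sum_sub_distrib]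
    refine Finset.sum_congr rfl fun b _ => by ring
  rw [h]
  set f : Fin S → Fin S → ℝ :=
    fun a b => P a j * P b i * (π₁ a * π₂ b - π₂ a * π₁ b) with hf
  have hpair : ∀ a b : Fin S, 0 ≤ f a b + f b a := by
    intro a b
    have main : ∀ a b : Fin S, a < b → 0 ≤ f a b + f b a := by
      intro a b hab
      have hD : 0 ≤ π₁ b * π₂ a - π₂ b * π₁ a :=
        sub_nonneg.mpr (hmlr a b hab)
      have hT : 0 ≤ P a i * P b j - P a j * P b i :=
        sub_nonneg.mpr (hPtp2 a b i j hab hij)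
      have : f a b + f b a =
          (π₁ b * π₂ a - π₂ b * π₁ a) * (P a i * P b j - P a j * P b i) := by
        simp only [hf]; ring
      rw [this]; exact mul_nonneg hD hT
    rcases lt_trichotomy a b with hab | hab | hab
    · exact main a b hab
    · subst hab; simp only [hf]; nlinarith [sq_nonneg (π₁ a * π₂ a)]
    · have := main b a hab; linarith
  have h2 : 0 ≤ ∑ a, ∑ b, (f a b + f b a) := by
    refine Finset.sum_nonneg fun a _ => Finset.sum_nonneg fun b _ => hpair a b
  have hcomm : (∑ a, ∑ b, f b a) = ∑ a, ∑ b, f a b := Finset.sum_comm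
  simp only [Finset.sum_add_distrib] at h2
  rw [hcomm] at h2
  linarith

/-- if P and B are TP2 then the Bayesian filter update preserves
MLR ordering in the belief. -/
theorem filter_preserves_mlr (S Y : ℕ) (P : Fin S → Fin S → ℝ)
    (B : Fin S → Fin Y → ℝ)
    (hP0 : ∀ i j, 0 ≤ P i j) (hProw : ∀ i, ∑ j, P i j = 1) (hPtp2 : IsTP2' P)
    (hB0 : ∀ i y, 0 ≤ B i y) (hBtp2 : IsTP2' B)
    (π₁ π₂ : Fin S → ℝ) (h₁ : IsSimplex π₁) (h₂ : IsSimplex π₂)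
    (hmlr : MLRge π₁ π₂) (y : Fin Y)
    (hσ₁ : 0 < ∑ j, B j y * (∑ i, P i j * π₁ i))
    (hσ₂ : 0 < ∑ j, B j y * (∑ i, P i j * π₂ i)) :
    MLRge (filterUpdate P B π₁ y) (filterUpdate P B π₂ y) := by
  intro i j hij
  unfold filterUpdate
  rw [div_mul_div_comm, div_mul_div_comm,
    div_le_div_iff₀ (mul_pos hσ₂ hσ₁) (mul_pos hσ₁ hσ₂)]
  have key := key_mlr P hPtp2 π₁ π₂ hmlr i j hij
  have hBB : 0 ≤ B i y * B j y := mul_nonneg (hB0 i y) (hB0 j y)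
  have hσσ : 0 ≤ (∑ j', B j' y * (∑ i, P i j' * π₁ i)) *
      (∑ j', B j' y * (∑ i, P i j' * π₂ i)) := by positivity
  nlinarith [mul_le_mul_of_nonneg_left
      (mul_le_mul_of_nonneg_left key hBB) hσσ]
end

section
/- For a fixed belief π and TP2 transition and observation matrices P and B, the filter update is MLR increasing in the observation: if y₁ ≤ y₂ then T(π, y₁) ≤_r T(π, y₂), where T(π,y) = B_y Pᵀ π / (𝟙ᵀ B_y Pᵀ π). -/
/-- for fixed π and TP2 matrices P, B, the filter update is MLR
increasing in the observation: y₁ ≤ y₂ implies T(π,y₁) ≤_r T(π,y₂). -/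
theorem filter_mlr_increasing_in_observation (S Y : ℕ)
    (P : Fin S → Fin S → ℝ) (B : Fin S → Fin Y → ℝ)
    (hP0 : ∀ i j, 0 ≤ P i j) (hProw : ∀ i, ∑ j, P i j = 1) (hPtp2 : IsTP2' P)
    (hB0 : ∀ i y, 0 ≤ B i y) (hBtp2 : IsTP2' B)
    (π : Fin S → ℝ) (hπ : IsSimplex π) (y₁ y₂ : Fin Y) (hy : y₁ ≤ y₂)
    (hσ₁ : 0 < ∑ j, B j y₁ * (∑ i, P i j * π i))
    (hσ₂ : 0 < ∑ j, B j y₂ * (∑ i, P i j * π i)) :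
    MLRge (filterUpdate P B π y₂) (filterUpdate P B π y₁) := by
  intro i j hij
  unfold filterUpdate
  have hq0 : ∀ k : Fin S, 0 ≤ ∑ m, P m k * π m :=
    fun k => Finset.sum_nonneg fun m _ => mul_nonneg (hP0 m k) (hπ.1 m)
  have key : B i y₂ * B j y₁ * ((∑ m, P m i * π m) * (∑ m, P m j * π m)) ≤
      B i y₁ * B j y₂ * ((∑ m, P m i * π m) * (∑ m, P m j * π m)) := by
    rcases eq_or_lt_of_le hy with h | h
    · subst h; ring_nf; exact le_refl _
    · exact mul_le_mul_of_nonneg_right (hBtp2 i j y₁ y₂ hij h)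
        (mul_nonneg (hq0 i) (hq0 j))
  rw [div_mul_div_comm, div_mul_div_comm, div_le_div_iff₀ (by positivity) (by positivity)]
  nlinarith [mul_le_mul_of_nonneg_right key (le_of_lt (mul_pos hσ₁ hσ₂))]
end

section
/- In the value iteration recursion for the multiple stopping POMDP, the marginal values satisfy W_k(π, l) ≤ W_k(π, l+1) for all k, all π in the belief simplex, and all l ∈ {1,...,L−1}, where W_k(π,l) = V_k(π,l) − V_k(π,l+1). Consequently the stopping sets are nested: M^{l+1}_k ⊆ M^l_k. -/
/-- in the value iteration recursion for the multiple stopping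
POMDP, W_k(π,l) = V_k(π,l) − V_k(π,l+1) is increasing in l
(W_k(π,l) ≤ W_k(π,l+1) for 1 ≤ l ≤ L−1), and consequently the mine sets are
nested: M^{l+1}_{k+1} ⊆ M^l_{k+1}. -/
theorem multiple_stopping_nested_sets
    (S Y L : ℕ) (hL : 1 ≤ L) (ρ : ℝ) (hρ0 : 0 < ρ) (hρ1 : ρ < 1)
    (r : Fin S → ℝ)
    (T : (Fin S → ℝ) → Fin Y → (Fin S → ℝ))
    (σ : (Fin S → ℝ) → Fin Y → ℝ)
    (hσ : ∀ π y, 0 ≤ σ π y)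
    (hT : ∀ π y, IsSimplex π → IsSimplex (T π y))
    (V : ℕ → (Fin S → ℝ) → ℕ → ℝ)
    -- initial condition W_0(·,·) = 0
    (hW0 : ∀ π l, 1 ≤ l → l ≤ L → V 0 π l - V 0 π (l + 1) = 0)
    -- boundary condition V_k(π, L+1) = 0
    (hVend : ∀ k π, V k π (L + 1) = 0)
    -- value iteration recursion
    (hrec : ∀ k π l, 1 ≤ l → l ≤ L →
      V (k + 1) π l =
        max ((∑ i, r i * π i) + ρ * ∑ y, V k (T π y) (l + 1) * σ π y)
            (ρ * ∑ y, V k (T π y) l * σ π y)) :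
    (∀ k (π : Fin S → ℝ) l, IsSimplex π → 1 ≤ l → l + 1 ≤ L →
      V k π l - V k π (l + 1) ≤ V k π (l + 1) - V k π (l + 2)) ∧
    (∀ k (π : Fin S → ℝ) l, IsSimplex π → 1 ≤ l → l + 1 ≤ L →
      -- π ∈ M^{l+1}_{k+1} implies π ∈ M^l_{k+1}
      (ρ * ∑ y, (V k (T π y) (l + 1) - V k (T π y) (l + 2)) * σ π y
          ≤ ∑ i, r i * π i) →
      (ρ * ∑ y, (V k (T π y) l - V k (T π y) (l + 1)) * σ π y
          ≤ ∑ i, r i * π i)) := by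
  have key : ∀ k (π : Fin S → ℝ) l, IsSimplex π → 1 ≤ l → l + 1 ≤ L →
      V k π l - V k π (l + 1) ≤ V k π (l + 1) - V k π (l + 2) := by
    intro k
    induction k with
    | zero =>
      intro π l hπ hl hlL
      have h1 := hW0 π l hl (by omega)
      have h2 := hW0 π (l + 1) (by omega) hlL
      linarith
    | succ k ih =>
      intro π l hπ hl hlL
      set R := ∑ i, r i * π i with hR
      set s : ℕ → ℝ := fun m => ∑ y, V k (T π y) m * σ π y with hs_def
      have hc : ∀ m, 1 ≤ m → m + 1 ≤ L → s m + s (m + 2) ≤ 2 * s (m + 1) := by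
        intro m hm hmL
        have h : ∀ y ∈ (Finset.univ : Finset (Fin Y)),
            V k (T π y) m * σ π y + V k (T π y) (m + 2) * σ π y
              ≤ 2 * (V k (T π y) (m + 1) * σ π y) := by
          intro y _
          have h1 := ih (T π y) m (hT π y hπ) hm hmL
          nlinarith [hσ π y]
        calc s m + s (m + 2)
            = ∑ y, (V k (T π y) m * σ π y + V k (T π y) (m + 2) * σ π y) := by
              rw [Finset.sum_add_distrib]
          _ ≤ ∑ y, 2 * (V k (T π y) (m + 1) * σ π y) := Finset.sum_le_sum h
          _ = 2 * s (m + 1) := by rw [← Finset.mul_sum]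
      have e1 : V (k + 1) π l = max (R + ρ * s (l + 1)) (ρ * s l) :=
        hrec k π l hl (by omega)
      have e2 : V (k + 1) π (l + 1) = max (R + ρ * s (l + 2)) (ρ * s (l + 1)) :=
        hrec k π (l + 1) (by omega) hlL
      have hc1 : ρ * s l + ρ * s (l + 2) ≤ 2 * (ρ * s (l + 1)) := by
        have := hc l hl hlL
        nlinarith
      by_cases hcase : l + 2 ≤ L
      · have e3 : V (k + 1) π (l + 2) = max (R + ρ * s (l + 3)) (ρ * s (l + 2)) :=
          hrec k π (l + 2) (by omega) hcase
        have hc2 : ρ * s (l + 1) + ρ * s (l + 3) ≤ 2 * (ρ * s (l + 2)) := by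
          have := hc (l + 1) (by omega) hcase
          nlinarith
        rw [e1, e2, e3]
        rcases max_cases (R + ρ * s (l + 1)) (ρ * s l) with ⟨h1, h1'⟩ | ⟨h1, h1'⟩ <;>
          rcases max_cases (R + ρ * s (l + 3)) (ρ * s (l + 2)) with ⟨h3, h3'⟩ | ⟨h3, h3'⟩ <;>
          rw [h1, h3] <;>
          [skip; skip; skip; skip] <;>
          · have hm1 : R + ρ * s (l + 2) ≤ max (R + ρ * s (l + 2)) (ρ * s (l + 1)) :=
              le_max_left _ _
            have hm2 : ρ * s (l + 1) ≤ max (R + ρ * s (l + 2)) (ρ * s (l + 1)) :=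
              le_max_right _ _
            linarith
      · have hL2 : l + 2 = L + 1 := by omega
        have e3 : V (k + 1) π (l + 2) = 0 := by rw [hL2]; exact hVend (k + 1) π
        have hs2 : s (l + 2) = 0 := by
          simp only [hs_def, hL2]
          simp [hVend k]
        have hρs2 : ρ * s (l + 2) = 0 := by rw [hs2]; ring
        rw [e1, e2, e3]
        rcases max_cases (R + ρ * s (l + 1)) (ρ * s l) with ⟨h1, h1'⟩ | ⟨h1, h1'⟩ <;>
          rw [h1] <;>
          · have hm1 : R + ρ * s (l + 2) ≤ max (R + ρ * s (l + 2)) (ρ * s (l + 1)) :=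
              le_max_left _ _
            have hm2 : ρ * s (l + 1) ≤ max (R + ρ * s (l + 2)) (ρ * s (l + 1)) :=
              le_max_right _ _
            linarith
  refine ⟨key, ?_⟩
  intro k π l hπ hl hlL hM
  refine le_trans ?_ hM
  have h : ∀ y ∈ (Finset.univ : Finset (Fin Y)),
      (V k (T π y) l - V k (T π y) (l + 1)) * σ π y
        ≤ (V k (T π y) (l + 1) - V k (T π y) (l + 2)) * σ π y := by
    intro y _
    exact mul_le_mul_of_nonneg_right (key k (T π y) l (hT π y hπ) hl hlL) (hσ π y)
  exact mul_le_mul_of_nonneg_left (Finset.sum_le_sum h) hρ0.le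
end
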